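/- arXiv:0909.4003 — 2 statements merged into one kernel-verified Lean document; each statement's English description precedes it below -/
import Mathlib

section
/- Let o be a noetherian commutative ring, F a nonarchimedean local field, B the upper triangular subgroup of GL(2,F), and let V be a smooth representation of B over o. Let V_0 and V_0' be two o[B_0 Z]-submodules of V (for the restricted action of B_0 Z), each finitely generated over o[B_0 Z] and each generating V as o[B]-module. Then there exists an o[B_0 Z]-submodule M of V, finitely generated over o[B_0 Z], such that <B^+ V_0> + M = <B^+ V_0'> + M, where <B^+ W> denotes the o-submodule of V generated by the elements bw for b in B^+ and w in W. -/
noncomputable section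
attribute [local instance] Classical.propDecidable
open Pointwise


/-! ### Generalities on smooth representations over a commutative ring `o` -/

section RepPrelim

variable (o : Type) [CommRing o]

/-- The `o`-submodule of `V` generated by `{s • w | s ∈ S, w ∈ W}`; written `<S W>` in the paper. -/
def gspan {H : Type} (V : Type) [AddCommGroup V] [Module o V] [SMul H V]
    (S : Set H) (W : Set V) : Submodule o V :=
  Submodule.span o {v : V | ∃ s ∈ S, ∃ w ∈ W, v = s • w}

/-- A submodule `N` is stable under the set `S` of group elements. -/
def IsStableSub {H : Type} (V : Type) [AddCommGroup V] [Module o V] [SMul H V]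
    (S : Set H) (N : Submodule o V) : Prop :=
  ∀ s ∈ S, ∀ v ∈ N, s • v ∈ N

/-- `N` is a finitely generated module over `o[S]`. -/
def IsFGOver {H : Type} (V : Type) [AddCommGroup V] [Module o V] [SMul H V]
    (S : Set H) (N : Submodule o V) : Prop :=
  ∃ X : Finset V, (X : Set V) ⊆ (N : Set V) ∧ N = gspan o V S (X : Set V)

/-- The submodule of `S`-invariants. -/
def invariantsSub (H : Type) [Group H] (V : Type) [AddCommGroup V] [Module o V]
    [DistribMulAction H V] [SMulCommClass H o V] (S : Set H) : Submodule o V where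
  carrier := {v | ∀ s ∈ S, s • v = v}
  add_mem' := by intro a b ha hb s hs; rw [smul_add, ha s hs, hb s hs]
  zero_mem' := by intro s hs; exact smul_zero s
  smul_mem' := by intro c v hv s hs; rw [smul_comm, hv s hs]

/-- The action of a fixed group element as an `o`-linear map. -/
def actLin (H : Type) [Group H] (V : Type) [AddCommGroup V] [Module o V]
    [DistribMulAction H V] [SMulCommClass H o V] (g : H) : V →ₗ[o] V where
  toFun v := g • v
  map_add' := smul_add g
  map_smul' c v := by simpa using smul_comm g c v

/-- `V` has finite length as an `o[H]`-module: it admits a composition series of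
`H`-stable `o`-submodules. -/
def IsFiniteLengthRep (H : Type) [Group H] (V : Type) [AddCommGroup V] [Module o V]
    [DistribMulAction H V] : Prop :=
  ∃ (n : ℕ) (c : Fin (n + 1) → Submodule o V),
    c 0 = ⊥ ∧ c (Fin.last n) = ⊤ ∧
    (∀ i, IsStableSub o V (Set.univ : Set H) (c i)) ∧
    (∀ i : Fin n, c i.castSucc < c i.succ) ∧
    (∀ i : Fin n, ∀ N : Submodule o V, IsStableSub o V (Set.univ : Set H) N →
      c i.castSucc ≤ N → N ≤ c i.succ → N = c i.castSucc ∨ N = c i.succ)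

/-- Smoothness: each vector has open stabilizer. -/
def IsSmoothRep (H : Type) [Group H] [TopologicalSpace H] (V : Type) [AddCommGroup V]
    [Module o V] [DistribMulAction H V] : Prop :=
  ∀ v : V, IsOpen {h : H | h • v = v}

/-- Admissibility: invariants under any compact open subgroup form a f.g. `o`-module. -/
def IsAdmissibleRep (H : Type) [Group H] [TopologicalSpace H] (V : Type) [AddCommGroup V]
    [Module o V] [DistribMulAction H V] [SMulCommClass H o V] : Prop :=
  ∀ H' : Subgroup H, IsCompact (H' : Set H) → IsOpen (H' : Set H) →
    (invariantsSub o H V (H' : Set H)).FG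

end RepPrelim

/-! ### Compact induction `ind_{S}^{H}(V₀)` and finite presentations -/

section Induction

variable (o : Type) [CommRing o]
variable {H : Type} [Group H] {V : Type} [AddCommGroup V] [Module o V]
variable [DistribMulAction H V] [SMulCommClass H o V]

/-- The compact induction `ind_S^H (V₀)`, realized as the `o`-module of functions
`f : H → V` with values in `V₀`, satisfying `f (s * h) = s • f h` for `s ∈ S`, and
supported on finitely many right cosets `S * x`. -/
def Ind (S : Subgroup H) (V0 : Submodule o V) : Submodule o (H → V) where
  carrier := {f | (∀ h, f h ∈ V0) ∧ (∀ s ∈ S, ∀ h, f (s * h) = s • f h) ∧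
      ∃ X : Finset H, ∀ h, f h ≠ 0 → ∃ s ∈ S, ∃ x ∈ X, h = s * x}
  add_mem' := by
    rintro f g ⟨hf1, hf2, Xf, hXf⟩ ⟨hg1, hg2, Xg, hXg⟩
    refine ⟨fun h => V0.add_mem (hf1 h) (hg1 h),
      fun s hs h => by simp only [Pi.add_apply, hf2 s hs h, hg2 s hs h, smul_add],
      Xf ∪ Xg, fun h hh => ?_⟩
    by_cases hf : f h = 0
    · have hg : g h ≠ 0 := fun h0 => hh (by simp [Pi.add_apply, hf, h0])
      obtain ⟨s, hs, x, hx, hxx⟩ := hXg h hg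
      exact ⟨s, hs, x, Finset.mem_union_right _ hx, hxx⟩
    · obtain ⟨s, hs, x, hx, hxx⟩ := hXf h hf
      exact ⟨s, hs, x, Finset.mem_union_left _ hx, hxx⟩
  zero_mem' :=
    ⟨fun _ => V0.zero_mem, fun s _ _ => (smul_zero s).symm, ∅, fun h hh => absurd rfl hh⟩
  smul_mem' := by
    rintro c f ⟨hf1, hf2, Xf, hXf⟩
    refine ⟨fun h => V0.smul_mem c (hf1 h),
      fun s hs h => by
        simp only [Pi.smul_apply, hf2 s hs h]
        exact (smul_comm s c (f h)).symm,
      Xf, fun h hh => hXf h (fun h0 => hh (by simp [Pi.smul_apply, h0]))⟩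

variable {S : Subgroup H} {V0 : Submodule o V}

/-- Right translation, giving the `H`-action on the compact induction. -/
def indTrans (g : H) (f : H → V) : H → V := fun h => f (h * g)

lemma indTrans_mem (g : H) {f : H → V} (hf : f ∈ Ind o S V0) : indTrans g f ∈ Ind o S V0 := by
  obtain ⟨h1, h2, X, hX⟩ := hf
  refine ⟨fun h => h1 _, fun s hs h => by
      simpa [indTrans, mul_assoc] using h2 s hs (h * g),
    X.image (· * g⁻¹), fun h hh => ?_⟩
  obtain ⟨s, hs, x, hx, hxx⟩ := hX (h * g) hh
  refine ⟨s, hs, x * g⁻¹, Finset.mem_image_of_mem _ hx, ?_⟩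
  rw [← mul_assoc, ← hxx, mul_assoc, mul_inv_cancel, mul_one]

instance : SMul H (Ind o S V0) :=
  ⟨fun g f => ⟨indTrans g (f : H → V), indTrans_mem o g f.2⟩⟩

lemma ind_smul_apply (g : H) (f : Ind o S V0) (h : H) :
    ((g • f : Ind o S V0) : H → V) h = (f : H → V) (h * g) := rfl

instance : MulAction H (Ind o S V0) where
  one_smul f := Subtype.ext (funext fun h => by simp [ind_smul_apply])
  mul_smul g1 g2 f := Subtype.ext (funext fun h => by simp [ind_smul_apply, mul_assoc])

instance : DistribMulAction H (Ind o S V0) where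
  smul_add g f1 f2 := Subtype.ext (funext fun h => rfl)
  smul_zero g := Subtype.ext (funext fun h => rfl)

instance : SMulCommClass H o (Ind o S V0) :=
  ⟨fun g c f => Subtype.ext (funext fun h => rfl)⟩

/-- The function `[1, v]` supported on `S`, with value `v` at `1`. -/
def unitFn (S : Subgroup H) (v : V) : H → V := fun h => if h ∈ S then h • v else 0

lemma unitFn_mem (hst : IsStableSub o V (S : Set H) V0) {v : V} (hv : v ∈ V0) :
    unitFn S v ∈ Ind o S V0 := by
  refine ⟨fun h => ?_, fun s hs h => ?_, {1}, fun h hh => ?_⟩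
  · by_cases h1 : h ∈ S
    · simpa [unitFn, h1] using hst h h1 v hv
    · simp [unitFn, h1, V0.zero_mem]
  · by_cases h1 : h ∈ S
    · have hsh : s * h ∈ S := S.mul_mem hs h1
      simp [unitFn, h1, hsh, mul_smul]
    · have hsh : s * h ∉ S := fun hc => h1 (by simpa using S.mul_mem (S.inv_mem hs) hc)
      simp [unitFn, h1, hsh]
  · by_cases h1 : h ∈ S
    · exact ⟨h, h1, 1, Finset.mem_singleton_self 1, (mul_one h).symm⟩
    · simp [unitFn, h1] at hh

/-- The element `[1, v]` of the compact induction. -/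
def unitElt (hst : IsStableSub o V (S : Set H) V0) {v : V} (hv : v ∈ V0) : Ind o S V0 :=
  ⟨unitFn S v, unitFn_mem o hst hv⟩

/-- `P` is the natural presentation map `ind_S^H (V₀) → V`: it is `H`-equivariant and sends
`[1, v]` to `v`. -/
def IsPresMap (hst : IsStableSub o V (S : Set H) V0) (P : Ind o S V0 →ₗ[o] V) : Prop :=
  (∀ (g : H) (f : Ind o S V0), P (g • f) = g • P f) ∧
  (∀ v (hv : v ∈ V0), P (unitElt o hst hv) = v)

end Induction

/-- `V₀ ⊆ V` yields a finite presentation `ind_S^H (V₀) → V`: `V₀` is an `S`-stable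
`o`-submodule, finitely generated over `o[S]`, generating `V` over `o[H]`, and the kernel of
the natural presentation map is finitely generated over `o[H]`. -/
def FinitelyPresentedVia (o : Type) [CommRing o] {H : Type} [Group H] {V : Type}
    [AddCommGroup V] [Module o V] [DistribMulAction H V] [SMulCommClass H o V]
    (S : Subgroup H) (V0 : Submodule o V) : Prop :=
  ∃ hst : IsStableSub o V (S : Set H) V0,
    IsFGOver o V (S : Set H) V0 ∧ gspan o V (Set.univ : Set H) (V0 : Set V) = ⊤ ∧
    ∃ P : Ind o S V0 →ₗ[o] V, IsPresMap o hst P ∧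
      IsFGOver o (Ind o S V0) (Set.univ : Set H) (LinearMap.ker P)

/-- `V` is of finite presentation relative to the open subgroup `S`. -/
def HasFinitePres (o : Type) [CommRing o] {H : Type} [Group H] (V : Type)
    [AddCommGroup V] [Module o V] [DistribMulAction H V] [SMulCommClass H o V]
    (S : Subgroup H) : Prop :=
  ∃ V0 : Submodule o V, FinitelyPresentedVia o S V0


/-! ### The group `GL(2,F)` over a nonarchimedean local field `F` -/

open Matrix

/-- Bundle of data making the field `F` a nonarchimedean local field: the valuation
ring `O`, a uniformizer `ϖ` generating the maximal ideal, finiteness of the residue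
field, compatibility of the topology with the valuation, and local compactness
(equivalently, completeness). -/
structure NALF (F : Type) [Field F] [TopologicalSpace F] [IsTopologicalRing F] where
  O : Subring F
  isValRing : ∀ x : F, x ≠ 0 → x ∈ O ∨ x⁻¹ ∈ O
  ϖ : F
  ϖ_mem : ϖ ∈ O
  ϖ_ne_zero : ϖ ≠ 0
  ϖ_not_unit : ϖ⁻¹ ∉ O
  ϖ_gen : ∀ x ∈ O, x⁻¹ ∉ O → x / ϖ ∈ O
  residue_finite : Finite (↥O ⧸ Ideal.span {(⟨ϖ, ϖ_mem⟩ : ↥O)})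
  nhds_zero : ∀ s : Set F, s ∈ nhds (0 : F) ↔ ∃ n : ℕ, {x : F | ∃ y ∈ O, x = ϖ ^ n * y} ⊆ s
  locallyCompact : LocallyCompactSpace F

variable (F : Type) [Field F]

lemma GL2.inv_entry_ne (g : GL (Fin 2) F)
    (hg : (g : Matrix (Fin 2) (Fin 2) F) 1 0 = 0) :
    ((g⁻¹ : GL (Fin 2) F) : Matrix (Fin 2) (Fin 2) F) 1 0 = 0 := by
  have hAC : (g : Matrix (Fin 2) (Fin 2) F) * ((g⁻¹ : GL (Fin 2) F) : Matrix (Fin 2) (Fin 2) F)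
      = 1 := by
    rw [← Units.val_mul, mul_inv_cancel, Units.val_one]
  have h1 : ((g : Matrix (Fin 2) (Fin 2) F) *
      ((g⁻¹ : GL (Fin 2) F) : Matrix (Fin 2) (Fin 2) F)) 1 0 = 0 := by
    rw [hAC]; exact Matrix.one_apply_ne (by decide)
  have h2 : ((g : Matrix (Fin 2) (Fin 2) F) *
      ((g⁻¹ : GL (Fin 2) F) : Matrix (Fin 2) (Fin 2) F)) 1 1 = 1 := by
    rw [hAC]; exact Matrix.one_apply_eq 1
  rw [Matrix.mul_apply, Fin.sum_univ_two, hg, zero_mul, zero_add] at h1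
  rw [Matrix.mul_apply, Fin.sum_univ_two, hg, zero_mul, zero_add] at h2
  rcases mul_eq_zero.mp h1 with h | h
  · exact absurd h2 (by rw [h, zero_mul]; exact zero_ne_one)
  · exact h

/-- The upper triangular (Borel) subgroup `B ⊆ GL(2,F)`. -/
def Bgr : Subgroup (GL (Fin 2) F) where
  carrier := {g | (g : Matrix (Fin 2) (Fin 2) F) 1 0 = 0}
  one_mem' := by
    show ((1 : GL (Fin 2) F) : Matrix (Fin 2) (Fin 2) F) 1 0 = 0
    rw [Units.val_one]; exact Matrix.one_apply_ne (by decide)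
  mul_mem' := by
    intro a b ha hb
    show ((a * b : GL (Fin 2) F) : Matrix (Fin 2) (Fin 2) F) 1 0 = 0
    rw [Units.val_mul, Matrix.mul_apply, Fin.sum_univ_two]
    simp only [Set.mem_setOf_eq] at ha hb
    rw [ha, hb, zero_mul, mul_zero, add_zero]
  inv_mem' := by
    intro a ha
    exact GL2.inv_entry_ne F a ha

/-- The maximal compact subgroup `K = GL(2, O_F)` of `GL(2,F)`. -/
def Kgr (O : Subring F) : Subgroup (GL (Fin 2) F) where
  carrier := {g | (∀ i j, (g : Matrix (Fin 2) (Fin 2) F) i j ∈ O) ∧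
      (∀ i j, ((g⁻¹ : GL (Fin 2) F) : Matrix (Fin 2) (Fin 2) F) i j ∈ O)}
  one_mem' := by
    constructor <;>
    · intro i j
      simp only [inv_one, Units.val_one]
      by_cases h : i = j
      · rw [h, Matrix.one_apply_eq]; exact O.one_mem
      · rw [Matrix.one_apply_ne h]; exact O.zero_mem
  mul_mem' := by
    rintro a b ⟨ha1, ha2⟩ ⟨hb1, hb2⟩
    constructor
    · intro i j
      rw [Units.val_mul, Matrix.mul_apply]
      exact Subring.sum_mem O fun k _ => O.mul_mem (ha1 i k) (hb1 k j)
    · intro i j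
      rw [_root_.mul_inv_rev, Units.val_mul, Matrix.mul_apply]
      exact Subring.sum_mem O fun k _ => O.mul_mem (hb2 i k) (ha2 k j)
  inv_mem' := by
    rintro a ⟨ha1, ha2⟩
    refine ⟨ha2, ?_⟩
    rw [inv_inv]
    exact ha1

/-- For a subgroup `A` of a group `G`, the subgroup `A · Z(G)`. -/
def centMul {G : Type} [Group G] (A : Subgroup G) : Subgroup G where
  carrier := {g | ∃ a ∈ A, ∃ z ∈ Subgroup.center G, g = a * z}
  one_mem' := ⟨1, A.one_mem, 1, (Subgroup.center G).one_mem, (one_mul 1).symm⟩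
  mul_mem' := by
    rintro x y ⟨a, ha, z, hz, rfl⟩ ⟨a', ha', z', hz', rfl⟩
    refine ⟨a * a', A.mul_mem ha ha', z * z', (Subgroup.center G).mul_mem hz hz', ?_⟩
    have hcz : a' * z = z * a' := Subgroup.mem_center_iff.mp hz a'
    calc a * z * (a' * z') = a * (z * a' * z') := by
          rw [mul_assoc]; rw [mul_assoc z a' z']
      _ = a * (a' * z * z') := by rw [← hcz]
      _ = a * a' * (z * z') := by rw [mul_assoc a a']; rw [mul_assoc a' z z']
  inv_mem' := by
    rintro x ⟨a, ha, z, hz, rfl⟩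
    refine ⟨a⁻¹, A.inv_mem ha, z⁻¹, (Subgroup.center G).inv_mem hz, ?_⟩
    rw [_root_.mul_inv_rev]
    exact (Subgroup.mem_center_iff.mp ((Subgroup.center G).inv_mem hz) a⁻¹).symm

variable [TopologicalSpace F] [IsTopologicalRing F] (L : NALF F)

/-- The element `t = diag(ϖ, 1)`. -/
def tGL : GL (Fin 2) F :=
  Matrix.GeneralLinearGroup.mkOfDetNeZero !![L.ϖ, 0; 0, 1]
    (by rw [Matrix.det_fin_two_of]; simpa using L.ϖ_ne_zero)

lemma tGL_val : (tGL F L : Matrix (Fin 2) (Fin 2) F) = !![L.ϖ, 0; 0, 1] := rfl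

/-- The unipotent element `u(x) = (1 x; 0 1)`. -/
def uGL (x : F) : GL (Fin 2) F :=
  Matrix.GeneralLinearGroup.mkOfDetNeZero !![1, x; 0, 1]
    (by rw [Matrix.det_fin_two_of]; simp)

lemma uGL_val (x : F) : (uGL F x : Matrix (Fin 2) (Fin 2) F) = !![1, x; 0, 1] := rfl

/-- The element `ω = (0 1; ϖ 0)`. -/
def ωGL : GL (Fin 2) F :=
  Matrix.GeneralLinearGroup.mkOfDetNeZero !![0, 1; L.ϖ, 0]
    (by rw [Matrix.det_fin_two_of]; simpa using L.ϖ_ne_zero)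

lemma ωGL_val : (ωGL F L : Matrix (Fin 2) (Fin 2) F) = !![0, 1; L.ϖ, 0] := rfl

/-- `B₀ = B ∩ K`: integral upper triangular matrices with unit diagonal. -/
def B0gr : Subgroup (GL (Fin 2) F) := Bgr F ⊓ Kgr F L.O

/-- The subgroup `KZ`. -/
def KZgr : Subgroup (GL (Fin 2) F) := centMul (Kgr F L.O)

/-- The subgroup `B₀Z`. -/
def B0Zgr : Subgroup (GL (Fin 2) F) := centMul (B0gr F L)

/-- The monoid `B⁺ = ⋃ₙ B₀ Z tⁿ`, as a subset of `GL(2,F)`. -/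
def BplusGL : Set (GL (Fin 2) F) :=
  {g | ∃ b ∈ B0Zgr F L, ∃ n : ℕ, g = b * (tGL F L) ^ n}

lemma tGL_mem_Bgr : tGL F L ∈ Bgr F := by
  show (tGL F L : Matrix (Fin 2) (Fin 2) F) 1 0 = 0
  rw [tGL_val]
  simp

lemma uGL_mem_Bgr (x : F) : uGL F x ∈ Bgr F := by
  show (uGL F x : Matrix (Fin 2) (Fin 2) F) 1 0 = 0
  rw [uGL_val]
  simp

/-- `t` as an element of `B`. -/
def tB : ↥(Bgr F) := ⟨tGL F L, tGL_mem_Bgr F L⟩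

/-- `u(x)` as an element of `B`. -/
def uB (x : F) : ↥(Bgr F) := ⟨uGL F x, uGL_mem_Bgr F x⟩

/-- The monoid `B⁺` as a subset of `B`. -/
def BplusB : Set ↥(Bgr F) := {b | (b : GL (Fin 2) F) ∈ BplusGL F L}

/-- The subgroup `B₀Z` of `B`. -/
def B0Zb : Subgroup ↥(Bgr F) := (B0Zgr F L).comap (Bgr F).subtype

/-- The subgroup `B ∩ KZ` of `B`. -/
def BcapKZb : Subgroup ↥(Bgr F) := (KZgr F L).comap (Bgr F).subtype

/-- The compact group `U₀ = U(O_F)` of integral upper unipotent matrices, as a subset. -/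
def U0set : Set (GL (Fin 2) F) :=
  {g | (g : Matrix (Fin 2) (Fin 2) F) 0 0 = 1 ∧ (g : Matrix (Fin 2) (Fin 2) F) 1 1 = 1 ∧
    (g : Matrix (Fin 2) (Fin 2) F) 1 0 = 0 ∧ (g : Matrix (Fin 2) (Fin 2) F) 0 1 ∈ L.O}

/-- `U_m = U(p_F^m O_F)`, as a subset of `GL(2,F)`. -/
def UmSet (m : ℕ) : Set (GL (Fin 2) F) :=
  {g | (g : Matrix (Fin 2) (Fin 2) F) 0 0 = 1 ∧ (g : Matrix (Fin 2) (Fin 2) F) 1 1 = 1 ∧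
    (g : Matrix (Fin 2) (Fin 2) F) 1 0 = 0 ∧
    ∃ y ∈ L.O, (g : Matrix (Fin 2) (Fin 2) F) 0 1 = L.ϖ ^ m * y}

/-- `U_m⁻ = U⁻(p_F^m O_F)`, the lower unipotent congruence subgroups, as a subset. -/
def UmMinusSet (m : ℕ) : Set (GL (Fin 2) F) :=
  {g | (g : Matrix (Fin 2) (Fin 2) F) 0 0 = 1 ∧ (g : Matrix (Fin 2) (Fin 2) F) 1 1 = 1 ∧
    (g : Matrix (Fin 2) (Fin 2) F) 0 1 = 0 ∧
    ∃ y ∈ L.O, (g : Matrix (Fin 2) (Fin 2) F) 1 0 = L.ϖ ^ m * y}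

/-- `T₀ = T(O_F)`: diagonal matrices with unit entries in `O_F`, as a subset. -/
def T0set : Set (GL (Fin 2) F) :=
  {g | (g : Matrix (Fin 2) (Fin 2) F) 1 0 = 0 ∧ (g : Matrix (Fin 2) (Fin 2) F) 0 1 = 0 ∧
    (g : Matrix (Fin 2) (Fin 2) F) 0 0 ∈ L.O ∧ ((g : Matrix (Fin 2) (Fin 2) F) 0 0)⁻¹ ∈ L.O ∧
    (g : Matrix (Fin 2) (Fin 2) F) 1 1 ∈ L.O ∧ ((g : Matrix (Fin 2) (Fin 2) F) 1 1)⁻¹ ∈ L.O}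

/-- The Iwahori subgroup `I ⊆ K`, as a subset: integral matrices whose reduction is
upper triangular. -/
def Iset : Set (GL (Fin 2) F) :=
  {g | g ∈ Kgr F L.O ∧ ∃ y ∈ L.O, (g : Matrix (Fin 2) (Fin 2) F) 1 0 = L.ϖ * y}

/-- The pro-`p` Iwahori subgroup `I₁ ⊆ I`, as a subset: integral matrices whose
reduction is upper unipotent. -/
def I1set : Set (GL (Fin 2) F) :=
  {g | g ∈ Kgr F L.O ∧ (∃ y ∈ L.O, (g : Matrix (Fin 2) (Fin 2) F) 1 0 = L.ϖ * y) ∧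
    (∃ y ∈ L.O, (g : Matrix (Fin 2) (Fin 2) F) 0 0 - 1 = L.ϖ * y) ∧
    (∃ y ∈ L.O, (g : Matrix (Fin 2) (Fin 2) F) 1 1 - 1 = L.ϖ * y)}

/-- The set `IZ`. -/
def IZset : Set (GL (Fin 2) F) :=
  {g | ∃ i ∈ Iset F L, ∃ z ∈ Subgroup.center (GL (Fin 2) F), g = i * z}

/-- The set `ωIZ`. -/
def ωIZset : Set (GL (Fin 2) F) := {g | ∃ h ∈ IZset F L, g = ωGL F L * h}

/-!
Every `b ∈ B` satisfies `tⁿ b ∈ B⁺` for large `n`; since `V₀` generates `V` over `o[B]`, every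
`v ∈ V` has `tⁿ v ∈ <B⁺ V₀>` for all large `n`, and likewise for `V₀'`. Fix finite generating
sets `X`, `X'` of `V₀`, `V₀'` over `o[B₀Z]` and one `N` serving all their elements for both
modules. As `B⁺ = ⋃ₘ B₀Z tᵐ`, a generator `b tᵐ x` (`b ∈ B₀Z`, `x ∈ X`) of `<B⁺ V₀> = <B⁺ X>`
lies in `<B⁺ V₀'>` when `m ≥ N`, and otherwise in the `o[B₀Z]`-module `M` generated by the
finitely many `tᵐ x` with `m < N`, `x ∈ X ∪ X'`. By symmetry `<B⁺ V₀> + M = <B⁺ V₀'> + M`.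
-/

open Filter

section SMul

variable {o : Type} [CommRing o] {H : Type} {V : Type} [AddCommGroup V] [Module o V] [SMul H V]

theorem mem_gspan {S : Set H} {W : Set V} {s : H} {w : V} (hs : s ∈ S) (hw : w ∈ W) :
    s • w ∈ gspan o V S W :=
  Submodule.subset_span ⟨s, hs, w, hw, rfl⟩

theorem gspan_mono_right {S : Set H} {W W' : Set V} (h : W ⊆ W') :
    gspan o V S W ≤ gspan o V S W' :=
  Submodule.span_mono fun _ ⟨s, hs, w, hw, hv⟩ => ⟨s, hs, w, h hw, hv⟩

end SMul

theorem isFGOver_gspan {o : Type} [CommRing o] {H : Type} [Monoid H] {V : Type} [AddCommGroup V]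
    [Module o V] [MulAction H V] (S : Submonoid H) (X : Finset V) :
    IsFGOver o V (S : Set H) (gspan o V (S : Set H) X) :=
  ⟨X, fun x hx => one_smul H x ▸ mem_gspan S.one_mem hx, rfl⟩

section Monoid

variable {o : Type} [CommRing o] {H : Type} [Monoid H] {V : Type} [AddCommGroup V] [Module o V]
  [DistribMulAction H V] [SMulCommClass H o V]

theorem smul_mem_gspan {S S' : Set H} {W : Set V} {b : H} (hb : ∀ s ∈ S, b * s ∈ S')
    {v : V} (hv : v ∈ gspan o V S W) : b • v ∈ gspan o V S' W := by
  suffices gspan o V S W ≤ (gspan o V S' W).comap (DistribSMul.toLinearMap o V b) from this hv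
  refine Submodule.span_le.2 ?_
  rintro _ ⟨s, hs, w, hw, rfl⟩
  show b • s • w ∈ gspan o V S' W
  exact mul_smul b s w ▸ mem_gspan (hb s hs) hw

theorem Submonoid.smul_mem_gspan {P : Submonoid H} {W : Set V} {p : H} (hp : p ∈ P) {v : V}
    (hv : v ∈ gspan o V (P : Set H) W) : p • v ∈ gspan o V (P : Set H) W :=
  _root_.smul_mem_gspan (fun _ hq => P.mul_mem hp hq) hv

theorem gspan_gspan_eq {P : Set H} {S : Submonoid H} (hPS : ∀ p ∈ P, ∀ s ∈ S, p * s ∈ P)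
    (W : Set V) : gspan o V P (gspan o V (S : Set H) W : Set V) = gspan o V P W :=
  le_antisymm
    (Submodule.span_le.2 fun _ ⟨p, hp, _, hw, hv⟩ => hv ▸ smul_mem_gspan (hPS p hp) hw)
    (gspan_mono_right fun w hw => one_smul H w ▸ mem_gspan S.one_mem hw)

theorem isStableSub_gspan (S : Submonoid H) (W : Set V) :
    IsStableSub o V (S : Set H) (gspan o V (S : Set H) W) :=
  fun _ hs _ hv => S.smul_mem_gspan hs hv

theorem eventually_pow_smul_mem_gspan {P : Submonoid H} {τ : H} (hτ : τ ∈ P)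
    (hcof : ∀ b : H, ∃ n : ℕ, τ ^ n * b ∈ P) {W : Set V}
    (hW : gspan o V (Set.univ : Set H) W = ⊤) (v : V) :
    ∀ᶠ n in atTop, τ ^ n • v ∈ gspan o V (P : Set H) W := by
  have hv : v ∈ gspan o V (Set.univ : Set H) W := hW ▸ Submodule.mem_top
  induction hv using Submodule.span_induction with
  | mem x hx =>
    obtain ⟨b, -, w, hw, rfl⟩ := hx
    obtain ⟨n₀, hn₀⟩ := hcof b
    refine eventually_atTop.2 ⟨n₀, fun n hn => ?_⟩
    rw [smul_smul, ← Nat.sub_add_cancel hn, pow_add, mul_assoc]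
    exact mem_gspan (P.mul_mem (P.pow_mem hτ _) hn₀) hw
  | zero => exact Eventually.of_forall fun n => (smul_zero (A := V) (τ ^ n)).symm ▸ zero_mem _
  | add x y _ _ hx hy =>
    exact (hx.and hy).mono fun n h => (smul_add (τ ^ n) x y).symm ▸ add_mem h.1 h.2
  | smul c x _ hx =>
    exact hx.mono fun n h => (smul_comm (τ ^ n) c x).symm ▸ Submodule.smul_mem _ c h

def truncatedOrbit (τ : H) (N : ℕ) (Z : Finset V) : Finset V :=
  (Z ×ˢ Finset.range N).image fun q => τ ^ q.2 • q.1

theorem gspan_le_sup_gspan_truncatedOrbit {P S : Submonoid H} (hSP : S ≤ P) {τ : H}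
    (hτ : τ ∈ P) (hdecomp : ∀ p ∈ P, ∃ s ∈ S, ∃ m : ℕ, p = s * τ ^ m) {W : Set V}
    {X Z : Finset V} (hXZ : X ⊆ Z) {N : ℕ} (hN : ∀ x ∈ X, τ ^ N • x ∈ gspan o V (P : Set H) W) :
    gspan o V (P : Set H) X ≤
      gspan o V (P : Set H) W ⊔ gspan o V (S : Set H) (truncatedOrbit τ N Z) := by
  refine Submodule.span_le.2 ?_
  rintro _ ⟨p, hp, x, hx, rfl⟩
  obtain ⟨s, hs, m, rfl⟩ := hdecomp p hp
  rw [mul_smul]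
  rcases le_or_gt N m with hNm | hmN
  · refine Submodule.mem_sup_left (P.smul_mem_gspan (hSP hs) ?_)
    rw [← Nat.sub_add_cancel hNm, pow_add, mul_smul]
    exact P.smul_mem_gspan (P.pow_mem hτ _) (hN x hx)
  · refine Submodule.mem_sup_right (mem_gspan hs ?_)
    exact Finset.mem_image.2 ⟨(x, m), Finset.mem_product.2 ⟨hXZ hx, Finset.mem_range.2 hmN⟩, rfl⟩

theorem exists_sup_gspan_eq_of_finset {P S : Submonoid H} (hSP : S ≤ P) {τ : H} (hτ : τ ∈ P)
    (hdecomp : ∀ p ∈ P, ∃ s ∈ S, ∃ m : ℕ, p = s * τ ^ m)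
    (hcof : ∀ b : H, ∃ n : ℕ, τ ^ n * b ∈ P) {X X' : Finset V}
    (hX : gspan o V (Set.univ : Set H) X = ⊤) (hX' : gspan o V (Set.univ : Set H) X' = ⊤) :
    ∃ Y : Finset V, gspan o V (P : Set H) X ⊔ gspan o V (S : Set H) Y =
      gspan o V (P : Set H) X' ⊔ gspan o V (S : Set H) Y := by
  obtain ⟨N, hN⟩ := ((eventually_all_finset (X ∪ X')).2 fun x _ =>
    (eventually_pow_smul_mem_gspan hτ hcof hX x).and
      (eventually_pow_smul_mem_gspan hτ hcof hX' x)).exists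
  refine ⟨truncatedOrbit τ N (X ∪ X'), le_antisymm ?_ ?_⟩
  · refine sup_le (gspan_le_sup_gspan_truncatedOrbit hSP hτ hdecomp Finset.subset_union_left
      fun x hx => (hN x (Finset.mem_union_left _ hx)).2) le_sup_right
  · refine sup_le (gspan_le_sup_gspan_truncatedOrbit hSP hτ hdecomp Finset.subset_union_right
      fun x hx => (hN x (Finset.mem_union_right _ hx)).1) le_sup_right

theorem exists_isFGOver_sup_gspan_eq {P S : Submonoid H} (hSP : S ≤ P) {τ : H} (hτ : τ ∈ P)
    (hdecomp : ∀ p ∈ P, ∃ s ∈ S, ∃ m : ℕ, p = s * τ ^ m)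
    (hcof : ∀ b : H, ∃ n : ℕ, τ ^ n * b ∈ P) {V0 V0' : Submodule o V}
    (hfg : IsFGOver o V (S : Set H) V0) (hfg' : IsFGOver o V (S : Set H) V0')
    (hgen : gspan o V (Set.univ : Set H) (V0 : Set V) = ⊤)
    (hgen' : gspan o V (Set.univ : Set H) (V0' : Set V) = ⊤) :
    ∃ M : Submodule o V, IsStableSub o V (S : Set H) M ∧ IsFGOver o V (S : Set H) M ∧
      gspan o V (P : Set H) (V0 : Set V) ⊔ M = gspan o V (P : Set H) (V0' : Set V) ⊔ M := by
  obtain ⟨X, -, rfl⟩ := hfg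
  obtain ⟨X', -, rfl⟩ := hfg'
  have hPS : ∀ p ∈ (P : Set H), ∀ s ∈ S, p * s ∈ P := fun p hp s hs => P.mul_mem hp (hSP hs)
  have hunivS : ∀ p ∈ (Set.univ : Set H), ∀ s ∈ S, p * s ∈ Set.univ := fun _ _ _ _ => trivial
  rw [gspan_gspan_eq hunivS] at hgen hgen'
  obtain ⟨Y, hY⟩ := exists_sup_gspan_eq_of_finset hSP hτ hdecomp hcof hgen hgen'
  refine ⟨gspan o V (S : Set H) Y, isStableSub_gspan S _, isFGOver_gspan S Y, ?_⟩
  rwa [gspan_gspan_eq hPS, gspan_gspan_eq hPS]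

end Monoid

namespace NALF

variable {F}

theorem exists_not_pow_dvd {y : F} (hy : y ≠ 0) :
    ∃ N : ℕ, ¬∃ z ∈ L.O, y = L.ϖ ^ N * z := by
  -- `y⁻¹ • ϖᴺO ⊆ ϖO` for large `N` by continuity, while `1 = y⁻¹ y ∉ ϖO`.
  have hnhds : (fun w => y⁻¹ * w) ⁻¹' {x | ∃ z ∈ L.O, x = L.ϖ ^ 1 * z} ∈ nhds (0 : F) :=
    (continuous_const.mul continuous_id).continuousAt.preimage_mem_nhds
      (by simpa using (L.nhds_zero _).2 ⟨1, subset_rfl⟩)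
  obtain ⟨N, hN⟩ := (L.nhds_zero _).1 hnhds
  refine ⟨N, fun hyN => L.ϖ_not_unit ?_⟩
  obtain ⟨z, hz, hyz : y⁻¹ * y = L.ϖ ^ 1 * z⟩ := hN hyN
  rw [inv_mul_cancel₀ hy, pow_one] at hyz
  rwa [inv_eq_of_mul_eq_one_right hyz.symm]

theorem exists_eq_pow_mul_unit {x : F} (hx : x ∈ L.O) (hx0 : x ≠ 0) :
    ∃ (m : ℕ) (u : F), u ∈ L.O ∧ u⁻¹ ∈ L.O ∧ x = L.ϖ ^ m * u := by
  obtain ⟨N, hN⟩ := L.exists_not_pow_dvd hx0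
  induction N generalizing x with
  | zero => exact absurd ⟨x, hx, by simp⟩ hN
  | succ N ih =>
    by_cases hu : x⁻¹ ∈ L.O
    · exact ⟨0, x, hx, hu, by simp⟩
    have hxϖ : x = L.ϖ * (x / L.ϖ) := (mul_div_cancel₀ x L.ϖ_ne_zero).symm
    obtain ⟨m, u, hu, hu', hxu⟩ := ih (L.ϖ_gen x hx hu) (div_ne_zero hx0 L.ϖ_ne_zero)
      fun ⟨z, hz, hxz⟩ => hN ⟨z, hz, by rw [hxϖ, hxz, pow_succ]; ring⟩
    exact ⟨m + 1, u, hu, hu', by rw [hxϖ, hxu, pow_succ]; ring⟩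

theorem exists_pow_mul_eq_pow_mul_unit {c : F} (hc : c ≠ 0) :
    ∃ (n m : ℕ) (u : F), u ∈ L.O ∧ u⁻¹ ∈ L.O ∧ L.ϖ ^ n * c = L.ϖ ^ m * u := by
  rcases L.isValRing c hc with hcO | hcO
  · obtain ⟨m, u, hu, hu', hcu⟩ := L.exists_eq_pow_mul_unit hcO hc
    exact ⟨0, m, u, hu, hu', by rw [pow_zero, one_mul, hcu]⟩
  · obtain ⟨m, u, hu, hu', hcu⟩ := L.exists_eq_pow_mul_unit hcO (inv_ne_zero hc)
    refine ⟨m, 0, u⁻¹, hu', by rwa [inv_inv], ?_⟩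
    rw [← inv_inv c, hcu, mul_inv, pow_zero, one_mul, ← mul_assoc,
      mul_inv_cancel₀ (pow_ne_zero _ L.ϖ_ne_zero), one_mul]

theorem exists_pow_mul_mem (x : F) : ∃ n : ℕ, L.ϖ ^ n * x ∈ L.O := by
  rcases eq_or_ne x 0 with rfl | hx
  · exact ⟨0, by rw [mul_zero]; exact L.O.zero_mem⟩
  · obtain ⟨n, m, u, hu, -, hxu⟩ := L.exists_pow_mul_eq_pow_mul_unit hx
    exact ⟨n, hxu ▸ L.O.mul_mem (pow_mem L.ϖ_mem m) hu⟩

end NALF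

namespace GL2

variable {K : Type} [Field K] {g : GL (Fin 2) K}

theorem apply_ne_zero_of_apply_one_zero (h10 : g.val 1 0 = 0) :
    g.val 0 0 ≠ 0 ∧ g.val 1 1 ≠ 0 := by
  have hdet : g.val 0 0 * g.val 1 1 ≠ 0 := by
    simpa [Matrix.det_fin_two, h10] using Matrix.det_ne_zero_of_right_inverse g.mul_inv
  exact ⟨left_ne_zero_of_mul hdet, right_ne_zero_of_mul hdet⟩

theorem val_inv_of_apply_one_zero (h10 : g.val 1 0 = 0) :
    (g⁻¹).val =
      !![(g.val 0 0)⁻¹, -(g.val 0 1 * (g.val 0 0)⁻¹ * (g.val 1 1)⁻¹); 0, (g.val 1 1)⁻¹] := by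
  obtain ⟨h00, h11⟩ := apply_ne_zero_of_apply_one_zero h10
  rw [Matrix.coe_units_inv, Matrix.inv_def, Matrix.adjugate_fin_two, Matrix.det_fin_two, h10,
    Ring.inverse_eq_inv']
  ext i j
  fin_cases i <;> fin_cases j <;> simp <;> field_simp

end GL2

section Borel

variable {F L}

theorem mem_B0gr_iff {g : GL (Fin 2) F} :
    g ∈ B0gr F L ↔ g.val 1 0 = 0 ∧ g.val 0 0 ∈ L.O ∧ (g.val 0 0)⁻¹ ∈ L.O ∧ g.val 0 1 ∈ L.O ∧
      g.val 1 1 ∈ L.O ∧ (g.val 1 1)⁻¹ ∈ L.O := by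
  constructor
  · rintro ⟨h10, hK, hK'⟩
    have hinv := GL2.val_inv_of_apply_one_zero h10
    refine ⟨h10, hK 0 0, ?_, hK 0 1, hK 1 1, ?_⟩
    · simpa [hinv] using hK' 0 0
    · simpa [hinv] using hK' 1 1
  · rintro ⟨h10, h00, h00', h01, h11, h11'⟩
    refine ⟨h10, fun i j => ?_, fun i j => ?_⟩
    · fin_cases i <;> fin_cases j <;> simp [h00, h01, h10, h11, L.O.zero_mem]
    · rw [GL2.val_inv_of_apply_one_zero h10]
      fin_cases i <;> fin_cases j <;>
        simp [h00', h11', L.O.zero_mem, L.O.mul_mem, h01]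

theorem tGL_pow_val (n : ℕ) : (tGL F L ^ n).val = !![L.ϖ ^ n, 0; 0, 1] := by
  induction n with
  | zero => rw [pow_zero, Units.val_one, pow_zero, Matrix.one_fin_two]
  | succ n ih =>
    rw [pow_succ, Units.val_mul, ih, tGL_val, Matrix.mul_fin_two, pow_succ]
    norm_num

theorem tGL_pow_mul_val (n : ℕ) (g : GL (Fin 2) F) :
    (tGL F L ^ n * g).val =
      !![L.ϖ ^ n * g.val 0 0, L.ϖ ^ n * g.val 0 1; g.val 1 0, g.val 1 1] := by
  rw [Units.val_mul, tGL_pow_val, Matrix.eta_fin_two g.val, Matrix.mul_fin_two]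
  simp

theorem tGL_pow_conj_val (n : ℕ) {g : GL (Fin 2) F} (h10 : g.val 1 0 = 0) :
    (tGL F L ^ n * g * (tGL F L ^ n)⁻¹).val =
      !![g.val 0 0, L.ϖ ^ n * g.val 0 1; 0, g.val 1 1] := by
  have ht10 : (tGL F L ^ n).val 1 0 = 0 := by rw [tGL_pow_val]; simp
  rw [Units.val_mul, tGL_pow_mul_val, GL2.val_inv_of_apply_one_zero ht10, tGL_pow_val, h10]
  ext i j
  fin_cases i <;> fin_cases j <;> simp [mul_comm _ (L.ϖ ^ n)⁻¹, pow_ne_zero n L.ϖ_ne_zero]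

theorem tGL_pow_conj_mem_B0gr (n : ℕ) {g : GL (Fin 2) F} (hg : g ∈ B0gr F L) :
    tGL F L ^ n * g * (tGL F L ^ n)⁻¹ ∈ B0gr F L := by
  obtain ⟨h10, h00, h00', h01, h11, h11'⟩ := mem_B0gr_iff.1 hg
  rw [mem_B0gr_iff, tGL_pow_conj_val n h10]
  simpa using ⟨h00, h00', L.O.mul_mem (pow_mem L.ϖ_mem n) h01, h11, h11'⟩

theorem tGL_pow_conj_mem_B0Zgr (n : ℕ) {g : GL (Fin 2) F} (hg : g ∈ B0Zgr F L) :
    tGL F L ^ n * g * (tGL F L ^ n)⁻¹ ∈ B0Zgr F L := by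
  obtain ⟨b, hb, z, hz, rfl⟩ := hg
  refine ⟨_, tGL_pow_conj_mem_B0gr n hb, z, hz, ?_⟩
  have hcz := Subgroup.mem_center_iff.mp hz (tGL F L ^ n)⁻¹
  calc tGL F L ^ n * (b * z) * (tGL F L ^ n)⁻¹
      = tGL F L ^ n * b * (z * (tGL F L ^ n)⁻¹) := by group
    _ = tGL F L ^ n * b * (tGL F L ^ n)⁻¹ * z := by rw [← hcz]; group

theorem BplusGL_mul {g h : GL (Fin 2) F} (hg : g ∈ BplusGL F L) (hh : h ∈ BplusGL F L) :
    g * h ∈ BplusGL F L := by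
  obtain ⟨b, hb, n, rfl⟩ := hg
  obtain ⟨c, hc, m, rfl⟩ := hh
  refine ⟨b * (tGL F L ^ n * c * (tGL F L ^ n)⁻¹),
    (B0Zgr F L).mul_mem hb (tGL_pow_conj_mem_B0Zgr n hc), n + m, ?_⟩
  rw [pow_add]
  group

theorem mem_BplusGL_of_apply_one_zero {g : GL (Fin 2) F} (h10 : g.val 1 0 = 0) {m : ℕ} {u : F}
    (hu : u ∈ L.O) (hu' : u⁻¹ ∈ L.O) (h00 : g.val 0 0 = L.ϖ ^ m * u * g.val 1 1)
    (h01 : g.val 0 1 / g.val 1 1 ∈ L.O) : g ∈ BplusGL F L := by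
  -- `g = b₀ · g₁₁ · tᵐ` with `b₀ = (u, g₀₁/g₁₁; 0, 1) ∈ B₀`.
  obtain ⟨hg00, hg11⟩ := GL2.apply_ne_zero_of_apply_one_zero h10
  have hu0 : u ≠ 0 := by rintro rfl; simp [h00] at hg00
  let b₀ : GL (Fin 2) F := Matrix.GeneralLinearGroup.mkOfDetNeZero
    !![u, g.val 0 1 / g.val 1 1; 0, 1] (by simpa [Matrix.det_fin_two_of] using hu0)
  have hb₀ : b₀ ∈ B0gr F L := mem_B0gr_iff.2 (by simpa [b₀] using ⟨hu, hu', h01⟩)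
  let z := Matrix.GeneralLinearGroup.scalar (Fin 2) (Units.mk0 _ hg11)
  have hz : z ∈ Subgroup.center _ := by
    rw [Matrix.GeneralLinearGroup.center_eq_range_scalar]; exact ⟨_, rfl⟩
  refine ⟨b₀ * z, ⟨b₀, hb₀, z, hz, rfl⟩, m, Units.ext ?_⟩
  rw [Units.val_mul, Units.val_mul, tGL_pow_val, Matrix.eta_fin_two g.val]
  ext i j
  fin_cases i <;> fin_cases j <;> simp [b₀, z, h00, h10, hg11]
  ring

end Borel

def BplusSubmonoid : Submonoid ↥(Bgr F) where
  carrier := BplusB F L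
  mul_mem' := BplusGL_mul
  one_mem' := ⟨1, (B0Zgr F L).one_mem, 0, by simp⟩

section Bplus

variable {F L}

theorem B0Zb_le_BplusSubmonoid : (B0Zb F L).toSubmonoid ≤ BplusSubmonoid F L :=
  fun b hb => ⟨b, hb, 0, by rw [pow_zero, mul_one]⟩

theorem tB_mem_BplusSubmonoid : tB F L ∈ BplusSubmonoid F L :=
  ⟨1, (B0Zgr F L).one_mem, 1, by rw [one_mul, pow_one]; rfl⟩

theorem exists_eq_mul_tB_pow_of_mem_BplusSubmonoid {p : ↥(Bgr F)} (hp : p ∈ BplusSubmonoid F L) :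
    ∃ s ∈ (B0Zb F L).toSubmonoid, ∃ m : ℕ, p = s * tB F L ^ m := by
  obtain ⟨b, hb, m, hpb⟩ := hp
  have hbB : b ∈ Bgr F := by
    rw [eq_mul_inv_of_mul_eq hpb.symm]
    exact (Bgr F).mul_mem p.2 ((Bgr F).inv_mem (pow_mem (tGL_mem_Bgr F L) m))
  exact ⟨⟨b, hbB⟩, hb, m, Subtype.ext hpb⟩

theorem exists_tB_pow_mul_mem_BplusSubmonoid (b : ↥(Bgr F)) :
    ∃ n : ℕ, tB F L ^ n * b ∈ BplusSubmonoid F L := by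
  set g : GL (Fin 2) F := ↑b
  have h10 : g.val 1 0 = 0 := b.2
  obtain ⟨hg00, hg11⟩ := GL2.apply_ne_zero_of_apply_one_zero h10
  obtain ⟨n₁, m, u, hu, hu', hn₁⟩ := L.exists_pow_mul_eq_pow_mul_unit (div_ne_zero hg00 hg11)
  obtain ⟨n₂, hn₂⟩ := L.exists_pow_mul_mem (g.val 0 1 / g.val 1 1)
  refine ⟨n₁ + n₂, ?_⟩
  change ((tB F L ^ (n₁ + n₂) * b : ↥(Bgr F)) : GL (Fin 2) F) ∈ BplusGL F L
  rw [Subgroup.coe_mul, SubgroupClass.coe_pow]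
  change tGL F L ^ (n₁ + n₂) * g ∈ BplusGL F L
  refine mem_BplusGL_of_apply_one_zero (m := m + n₂) ?_ hu hu' ?_ ?_ <;>
    simp only [tGL_pow_mul_val, Matrix.of_apply, Matrix.cons_val', Matrix.cons_val_zero,
      Matrix.cons_val_one, Matrix.empty_val', Matrix.cons_val_fin_one]
  · exact h10
  · field_simp at hn₁
    rw [pow_add, pow_add]
    linear_combination L.ϖ ^ n₂ * hn₁
  · convert L.O.mul_mem (pow_mem L.ϖ_mem n₁) hn₂ using 1
    ring

end Bplus

theorem statement2_general
    (o : Type) [CommRing o]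
    (F : Type) [Field F] [TopologicalSpace F] [IsTopologicalRing F] (LF : NALF F)
    (V : Type) [AddCommGroup V] [Module o V]
    [DistribMulAction (↥(Bgr F)) V] [SMulCommClass (↥(Bgr F)) o V]
    (V0 V0' : Submodule o V)
    (hfg : IsFGOver o V ((B0Zb F LF : Subgroup ↥(Bgr F)) : Set ↥(Bgr F)) V0)
    (hfg' : IsFGOver o V ((B0Zb F LF : Subgroup ↥(Bgr F)) : Set ↥(Bgr F)) V0')
    (hgen : gspan o V (Set.univ : Set ↥(Bgr F)) (V0 : Set V) = ⊤)
    (hgen' : gspan o V (Set.univ : Set ↥(Bgr F)) (V0' : Set V) = ⊤) :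
    ∃ M : Submodule o V,
      IsStableSub o V ((B0Zb F LF : Subgroup ↥(Bgr F)) : Set ↥(Bgr F)) M ∧
      IsFGOver o V ((B0Zb F LF : Subgroup ↥(Bgr F)) : Set ↥(Bgr F)) M ∧
      gspan o V (BplusB F LF) (V0 : Set V) ⊔ M = gspan o V (BplusB F LF) (V0' : Set V) ⊔ M :=
  exists_isFGOver_sup_gspan_eq B0Zb_le_BplusSubmonoid tB_mem_BplusSubmonoid
    (fun _ => exists_eq_mul_tB_pow_of_mem_BplusSubmonoid) exists_tB_pow_mul_mem_BplusSubmonoid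
    hfg hfg' hgen hgen'

/-- `<B⁺ V₀>` does not depend on the choice of the generating finitely
generated `o[B₀Z]`-submodule `V₀`, modulo finitely generated `o[B₀Z]`-modules. -/
theorem statement2
    (o : Type) [CommRing o] [IsNoetherianRing o]
    (F : Type) [Field F] [TopologicalSpace F] [IsTopologicalRing F] (LF : NALF F)
    (V : Type) [AddCommGroup V] [Module o V]
    [DistribMulAction (↥(Bgr F)) V] [SMulCommClass (↥(Bgr F)) o V]
    (hsm : IsSmoothRep o (↥(Bgr F)) V)
    (V0 V0' : Submodule o V)
    (hst : IsStableSub o V ((B0Zb F LF : Subgroup ↥(Bgr F)) : Set ↥(Bgr F)) V0)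
    (hst' : IsStableSub o V ((B0Zb F LF : Subgroup ↥(Bgr F)) : Set ↥(Bgr F)) V0')
    (hfg : IsFGOver o V ((B0Zb F LF : Subgroup ↥(Bgr F)) : Set ↥(Bgr F)) V0)
    (hfg' : IsFGOver o V ((B0Zb F LF : Subgroup ↥(Bgr F)) : Set ↥(Bgr F)) V0')
    (hgen : gspan o V (Set.univ : Set ↥(Bgr F)) (V0 : Set V) = ⊤)
    (hgen' : gspan o V (Set.univ : Set ↥(Bgr F)) (V0' : Set V) = ⊤) :
    ∃ M : Submodule o V,
      IsStableSub o V ((B0Zb F LF : Subgroup ↥(Bgr F)) : Set ↥(Bgr F)) M ∧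
      IsFGOver o V ((B0Zb F LF : Subgroup ↥(Bgr F)) : Set ↥(Bgr F)) M ∧
      gspan o V (BplusB F LF) (V0 : Set V) ⊔ M = gspan o V (BplusB F LF) (V0' : Set V) ⊔ M :=
  statement2_general o F LF V V0 V0' hfg hfg' hgen hgen'
end
end

section
/- Let o be a commutative ring, B a topological group, B_0 an open subgroup of B. Let V be a smooth representation of B over o with a finite presentation ind_{B_0}^B(V_0) -> V. Let W_0 be an o[B_0]-submodule of ind_{B_0}^B(V_0), finitely generated over o[B_0] and containing [1, V_0], and let W_0' be the image of W_0 in V. Then W_0' generates V and the associated presentation ind_{B_0}^B(W_0') -> V is also finite. -/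
noncomputable section
attribute [local instance] Classical.propDecidable
open Pointwise


/-!
Since `[1, V₀] ⊆ W₀`, the image `W₀'` contains `V₀`, so it generates `V`, and it is generated
over `o[B₀]` by the images `P x` of generators `x` of `W₀`. Let `ι : ind(V₀) → ind(W₀')` be the
inclusion and `K` the `o[B]`-span of the differences `[1, P x] - ι x`, which lie in the kernel of
`ind(W₀') → V`. The `v ∈ W₀'` with `[1, v] ∈ range ι + K` form a `B₀`-stable submodule containing
every `P x`, hence all of `W₀'`; as `ind(W₀')` is generated by the `[1, v]`, it equals
`range ι + K`. Therefore the kernel of `ind(W₀') → V` is `ι(ker P) + K`, which is finitely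
generated.
-/

section Gspan

variable {o : Type} [CommRing o] {H : Type} {V : Type} [AddCommGroup V] [Module o V] {S : Set H}

section SMul

variable [SMul H V]

lemma gspan_mono {A A' : Set V} (h : A ⊆ A') : gspan o V S A ≤ gspan o V S A' :=
  Submodule.span_mono fun _ ⟨s, hs, a, ha, hv⟩ => ⟨s, hs, a, h ha, hv⟩

lemma gspan_le {A : Set V} {U : Submodule o V} (hU : IsStableSub o V S U) (hA : A ⊆ U) :
    gspan o V S A ≤ U :=
  Submodule.span_le.mpr fun _ ⟨s, hs, a, ha, hv⟩ => hv ▸ hU s hs a (hA ha)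

lemma gspan_union (A A' : Set V) :
    gspan o V S (A ∪ A') = gspan o V S A ⊔ gspan o V S A' := by
  simp only [gspan, ← Submodule.span_union]
  congr 1
  ext v
  simp only [Set.mem_union, Set.mem_ofPred_eq]
  grind

variable {V' : Type} [AddCommGroup V'] [Module o V'] [SMul H V'] {F : V →ₗ[o] V'}

lemma map_gspan (hF : ∀ s ∈ S, ∀ v, F (s • v) = s • F v) (A : Set V) :
    (gspan o V S A).map F = gspan o V' S (F '' A) := by
  rw [gspan, Submodule.map_span, gspan]
  congr 1
  ext x
  constructor
  · rintro ⟨_, ⟨s, hs, a, ha, rfl⟩, rfl⟩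
    exact ⟨s, hs, F a, ⟨a, ha, rfl⟩, hF s hs a⟩
  · rintro ⟨s, hs, _, ⟨a, ha, rfl⟩, rfl⟩
    exact ⟨s • a, ⟨s, hs, a, ha, rfl⟩, hF s hs a⟩

lemma isStableSub_range (hF : ∀ s ∈ S, ∀ v, F (s • v) = s • F v) :
    IsStableSub o V' S (LinearMap.range F) := by
  rintro s hs _ ⟨v, rfl⟩
  exact ⟨s • v, hF s hs v⟩

end SMul

variable [Monoid H] [DistribMulAction H V]

lemma subset_gspan (h1 : (1 : H) ∈ S) (A : Set V) : A ⊆ gspan o V S A :=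
  fun a ha => Submodule.subset_span ⟨1, h1, a, ha, (one_smul H a).symm⟩

lemma isFGOver_of_eq_gspan (h1 : (1 : H) ∈ S) {N : Submodule o V} {A : Set V} (hA : A.Finite)
    (hN : N = gspan o V S A) : IsFGOver o V S N :=
  ⟨hA.toFinset, by rw [hA.coe_toFinset, hN]; exact subset_gspan h1 A,
    by rw [hA.coe_toFinset]; exact hN⟩

lemma isStableSub_sup {N N' : Submodule o V} (hN : IsStableSub o V S N)
    (hN' : IsStableSub o V S N') : IsStableSub o V S (N ⊔ N') := by
  intro s hs v hv
  obtain ⟨n, hn, n', hn', rfl⟩ := Submodule.mem_sup.mp hv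
  rw [smul_add]
  exact Submodule.add_mem_sup (hN s hs n hn) (hN' s hs n' hn')

lemma isStableSub_ker {V' : Type} [AddCommGroup V'] [Module o V'] [SMul H V']
    {F : V' →ₗ[o] V} (hF : ∀ s ∈ S, ∀ v, F (s • v) = s • F v) :
    IsStableSub o V' S (LinearMap.ker F) := fun s hs v hv => by
  rw [LinearMap.mem_ker, hF s hs, LinearMap.mem_ker.mp hv, smul_zero]

variable [SMulCommClass H o V]

lemma isStableSub_gspan_s7 (hS : ∀ a ∈ S, ∀ b ∈ S, a * b ∈ S) (A : Set V) :
    IsStableSub o V S (gspan o V S A) := by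
  intro s hs v hv
  induction hv using Submodule.span_induction with
  | mem _ h =>
    obtain ⟨t, ht, a, ha, rfl⟩ := h
    exact Submodule.subset_span ⟨s * t, hS s hs t ht, a, ha, (mul_smul s t a).symm⟩
  | zero => rw [smul_zero]; exact Submodule.zero_mem _
  | add _ _ _ _ h h' => rw [smul_add]; exact Submodule.add_mem _ h h'
  | smul c _ _ h => rw [smul_comm]; exact Submodule.smul_mem _ c h

lemma isStableSub_univ_gspan (A : Set V) :
    IsStableSub o V (Set.univ : Set H) (gspan o V (Set.univ : Set H) A) :=
  isStableSub_gspan_s7 (fun _ _ _ _ => Set.mem_univ _) A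

end Gspan

section Induction

variable {o : Type} [CommRing o] {H : Type} [Group H] {V : Type} [AddCommGroup V] [Module o V]
  [DistribMulAction H V] [SMulCommClass H o V] {S : Subgroup H} {V0 : Submodule o V}

namespace Ind

lemma apply_mem (f : Ind o S V0) (h : H) : (f : H → V) h ∈ V0 := f.2.1 h

lemma apply_mul (f : Ind o S V0) {s : H} (hs : s ∈ S) (h : H) :
    (f : H → V) (s * h) = s • (f : H → V) h :=
  f.2.2.1 s hs h

lemma exists_finset_support (f : Ind o S V0) :
    ∃ X : Finset H, ∀ h, (f : H → V) h ≠ 0 → ∃ s ∈ S, ∃ x ∈ X, h = s * x :=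
  f.2.2.2

lemma mono {W : Submodule o V} (hle : V0 ≤ W) : Ind o S V0 ≤ Ind o S W :=
  fun _ ⟨hval, hequiv, hsupp⟩ => ⟨fun h => hle (hval h), hequiv, hsupp⟩

end Ind

variable (hst : IsStableSub o V (S : Set H) V0)
include hst

lemma coe_unitElt {v : V} (hv : v ∈ V0) :
    ((unitElt o hst hv : Ind o S V0) : H → V) = unitFn S v := rfl

lemma unitElt_smul {s : H} (hs : s ∈ S) {v : V} (hv : v ∈ V0) :
    unitElt o hst (hst s hs v hv) = s • unitElt o hst hv := by
  refine Subtype.ext (funext fun h => ?_)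
  simp only [coe_unitElt, ind_smul_apply, unitFn, Subgroup.mul_mem_cancel_right S hs, mul_smul]

def unitLin : V0 →ₗ[o] Ind o S V0 where
  toFun v := unitElt o hst v.2
  map_add' v w := Subtype.ext (funext fun h => by
    by_cases hh : h ∈ S <;> simp [coe_unitElt, unitFn, hh])
  map_smul' c v := Subtype.ext (funext fun h => by
    by_cases hh : h ∈ S <;> simp [coe_unitElt, unitFn, hh, smul_comm h c])

lemma sub_smul_unitElt_apply (f : Ind o S V0) (a h : H) :
    ((f - a⁻¹ • unitElt o hst (Ind.apply_mem f a) : Ind o S V0) : H → V) h =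
      if h * a⁻¹ ∈ S then 0 else (f : H → V) h := by
  change (f : H → V) h - unitFn S ((f : H → V) a) (h * a⁻¹) = _
  unfold unitFn
  split_ifs with hmem
  · rw [← Ind.apply_mul f hmem, inv_mul_cancel_right, sub_self]
  · rw [sub_zero]

/-- Induction on the finitely many cosets `S a` supporting `f`: subtracting `a⁻¹ • [1, f a]`
kills `f` on `S a` and leaves it unchanged elsewhere. -/
lemma eq_top_of_unitElt_mem {Q : Submodule o (Ind o S V0)}
    (hQ : IsStableSub o (Ind o S V0) (Set.univ : Set H) Q)
    (hunit : ∀ v (hv : v ∈ V0), unitElt o hst hv ∈ Q) : Q = ⊤ := by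
  refine Submodule.eq_top_iff'.mpr fun f => ?_
  obtain ⟨X, hX⟩ := Ind.exists_finset_support f
  induction X using Finset.induction_on generalizing f with
  | empty =>
    have hf : f = 0 := Subtype.ext (funext fun h => by_contra fun hne => by simpa using hX h hne)
    exact hf ▸ Q.zero_mem
  | insert a X _ ih =>
    have hg : a⁻¹ • unitElt o hst (Ind.apply_mem f a) ∈ Q := hQ _ trivial _ (hunit _ _)
    suffices f - a⁻¹ • unitElt o hst (Ind.apply_mem f a) ∈ Q by simpa using Q.add_mem this hg
    refine ih _ fun h hne => ?_
    rw [sub_smul_unitElt_apply] at hne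
    split_ifs at hne with hmem
    · exact absurd rfl hne
    obtain ⟨s, hs, x, hx, rfl⟩ := hX h hne
    obtain rfl | hx := Finset.mem_insert.mp hx
    · exact absurd (by simpa using hs) hmem
    · exact ⟨s, hs, x, hx, rfl⟩

end Induction

section PresentationMap

variable {o : Type} [CommRing o] {H : Type} [Group H] {V : Type} [AddCommGroup V] [Module o V]
  [DistribMulAction H V] [SMulCommClass H o V] {S : Subgroup H} {V0 : Submodule o V}

/-- `h⁻¹ • f h` depends only on the coset `S h`; summing it over `S\H` gives the natural map
`ind(V₀) → V`. -/
def presMapTerm (f : Ind o S V0) : Quotient (QuotientGroup.rightRel S) → V :=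
  Quotient.lift (fun h => h⁻¹ • (f : H → V) h) fun a b hab => by
    have hba : b * a⁻¹ ∈ S := QuotientGroup.rightRel_apply.mp hab
    have hfb : (f : H → V) b = (b * a⁻¹) • (f : H → V) a := by
      simpa using Ind.apply_mul f hba a
    change a⁻¹ • _ = b⁻¹ • _
    rw [hfb, smul_smul, inv_mul_cancel_left]

lemma presMapTerm_mk (f : Ind o S V0) (h : H) :
    presMapTerm f (Quotient.mk _ h) = h⁻¹ • (f : H → V) h := rfl

lemma hasFiniteSupport_presMapTerm (f : Ind o S V0) : (presMapTerm f).HasFiniteSupport := by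
  obtain ⟨X, hX⟩ := Ind.exists_finset_support f
  refine (X.finite_toSet.image (Quotient.mk _)).subset fun q hq => ?_
  obtain ⟨h, rfl⟩ := Quotient.exists_rep q
  have hne : (f : H → V) h ≠ 0 := fun h0 => hq (by rw [presMapTerm_mk, h0, smul_zero])
  obtain ⟨s, hs, x, hx, rfl⟩ := hX h hne
  exact ⟨x, hx, Quotient.sound (QuotientGroup.rightRel_apply.mpr (by simpa using hs))⟩

def presMap : Ind o S V0 →ₗ[o] V where
  toFun f := ∑ᶠ q, presMapTerm f q
  map_add' f g := by
    rw [← finsum_add_distrib (hasFiniteSupport_presMapTerm f) (hasFiniteSupport_presMapTerm g)]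
    congr 1
    funext q
    induction q using Quotient.ind
    exact smul_add _ _ _
  map_smul' c f := by
    rw [RingHom.id_apply, smul_finsum' c (hasFiniteSupport_presMapTerm f)]
    congr 1
    funext q
    induction q using Quotient.ind
    exact smul_comm _ c _

def rightCosetShift (S : Subgroup H) (g : H) :
    Quotient (QuotientGroup.rightRel S) ≃ Quotient (QuotientGroup.rightRel S) :=
  Quotient.congr (Equiv.mulRight g) fun a b => by
    simp only [QuotientGroup.rightRel_apply, Equiv.coe_mulRight, mul_inv_rev, mul_assoc,
      mul_inv_cancel_left]

lemma presMap_smul (g : H) (f : Ind o S V0) : presMap (g • f) = g • presMap f := by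
  change ∑ᶠ q, presMapTerm (g • f) q = g • ∑ᶠ q, presMapTerm f q
  rw [smul_finsum' g (hasFiniteSupport_presMapTerm f),
    ← finsum_comp_equiv (rightCosetShift S g) (f := fun q => g • presMapTerm f q)]
  congr 1
  funext q
  obtain ⟨h, rfl⟩ := Quotient.exists_rep q
  change h⁻¹ • (f : H → V) (h * g) = g • ((h * g)⁻¹ • (f : H → V) (h * g))
  rw [smul_smul, mul_inv_rev, mul_inv_cancel_left]

lemma presMap_unitElt (hst : IsStableSub o V (S : Set H) V0) {v : V} (hv : v ∈ V0) :
    presMap (unitElt o hst hv) = v := by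
  change ∑ᶠ q, presMapTerm (unitElt o hst hv) q = v
  rw [finsum_eq_single _ (Quotient.mk _ 1)]
  · simp [presMapTerm_mk, coe_unitElt, unitFn]
  · intro q hq
    obtain ⟨h, rfl⟩ := Quotient.exists_rep q
    have hh : h ∉ S := fun hh =>
      hq (Quotient.sound (QuotientGroup.rightRel_apply.mpr (by simpa using hh)))
    simp [presMapTerm_mk, coe_unitElt, unitFn, hh]

lemma isPresMap_presMap (hst : IsStableSub o V (S : Set H) V0) : IsPresMap o hst presMap :=
  ⟨presMap_smul, fun _ => presMap_unitElt hst⟩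

end PresentationMap

lemma LinearMap.ker_eq_map_ker_sup_of_range_sup_eq_top {R M M' N : Type*} [Semiring R]
    [AddCommMonoid M] [AddCommMonoid M'] [AddCommMonoid N] [Module R M] [Module R M'] [Module R N]
    {ι : M →ₗ[R] M'} {P : M →ₗ[R] N} {P' : M' →ₗ[R] N} (hP : P'.comp ι = P)
    {K : Submodule R M'} (hK : K ≤ LinearMap.ker P') (hι : LinearMap.range ι ⊔ K = ⊤) :
    LinearMap.ker P' = (LinearMap.ker P).map ι ⊔ K := by
  refine le_antisymm (fun f hf => ?_) (sup_le ?_ hK)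
  · obtain ⟨_, ⟨a, rfl⟩, k, hk, rfl⟩ := Submodule.mem_sup.mp (hι ▸ Submodule.mem_top : f ∈ _)
    have ha : P a = 0 := by
      have hf' := LinearMap.mem_ker.mp hf
      rwa [map_add, LinearMap.mem_ker.mp (hK hk), add_zero, ← LinearMap.comp_apply, hP] at hf'
    exact Submodule.add_mem_sup ⟨a, ha, rfl⟩ hk
  · rintro _ ⟨a, ha, rfl⟩
    rw [LinearMap.mem_ker, ← LinearMap.comp_apply, hP]
    exact ha

section Kernel

variable {o : Type} [CommRing o] {H : Type} [Group H] {V : Type} [AddCommGroup V] [Module o V]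
  [DistribMulAction H V] [SMulCommClass H o V] {S : Subgroup H} {V0 : Submodule o V}
  (hst : IsStableSub o V (S : Set H) V0)
include hst

lemma linearMap_ext_of_unitElt {V' : Type} [AddCommGroup V'] [Module o V'] [SMul H V']
    {Φ Ψ : Ind o S V0 →ₗ[o] V'}
    (hΦ : ∀ (g : H) f, Φ (g • f) = g • Φ f) (hΨ : ∀ (g : H) f, Ψ (g • f) = g • Ψ f)
    (h : ∀ v (hv : v ∈ V0), Φ (unitElt o hst hv) = Ψ (unitElt o hst hv)) : Φ = Ψ := by
  have hQ : IsStableSub o (Ind o S V0) (Set.univ : Set H) (LinearMap.eqLocus Φ Ψ) :=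
    fun g _ f hf => by rw [LinearMap.mem_eqLocus, hΦ, hΨ, LinearMap.mem_eqLocus.mp hf]
  have htop := eq_top_of_unitElt_mem hst hQ h
  exact LinearMap.ext fun f => LinearMap.mem_eqLocus.mp (htop ▸ Submodule.mem_top)

/-- `v ↦ [1, v]` is `S`-equivariant, so the `v` with `[1, v] ∈ Q` form an `S`-stable
submodule. -/
lemma unitElt_mem_of_le_gspan {Q : Submodule o (Ind o S V0)}
    (hQ : IsStableSub o (Ind o S V0) (S : Set H) Q) {A : Set V} (hA : V0 ≤ gspan o V (S : Set H) A)
    (hAQ : ∀ a ∈ A, ∃ ha : a ∈ V0, unitElt o hst ha ∈ Q) :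
    ∀ v (hv : v ∈ V0), unitElt o hst hv ∈ Q := by
  let U := (Q.comap (unitLin hst)).map V0.subtype
  have hU : IsStableSub o V (S : Set H) U := by
    rintro s hs _ ⟨v, hv, rfl⟩
    refine ⟨⟨s • v.1, hst s hs v.1 v.2⟩, ?_, rfl⟩
    change unitElt o hst (hst s hs v.1 v.2) ∈ Q
    rw [unitElt_smul hst hs v.2]
    exact hQ s hs _ hv
  have hAU : A ⊆ U := fun a ha =>
    let ⟨haV0, haQ⟩ := hAQ a ha
    ⟨⟨a, haV0⟩, haQ, rfl⟩
  intro v hv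
  obtain ⟨w, hw, rfl⟩ := hA.trans (gspan_le hU hAU) hv
  exact hw

end Kernel

theorem isFGOver_ker_presMap {o : Type} [CommRing o] {H : Type} [Group H] {V : Type}
    [AddCommGroup V] [Module o V] [DistribMulAction H V] [SMulCommClass H o V]
    {S : Subgroup H} {V0 W : Submodule o V} {hst : IsStableSub o V (S : Set H) V0}
    {P : Ind o S V0 →ₗ[o] V} (hP : IsPresMap o hst P)
    (hker : IsFGOver o (Ind o S V0) (Set.univ : Set H) (LinearMap.ker P)) (hle : V0 ≤ W)
    {X : Finset (Ind o S V0)} (hW : W = gspan o V (S : Set H) (P '' X)) :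
    IsFGOver o (Ind o S W) (Set.univ : Set H) (LinearMap.ker (presMap : Ind o S W →ₗ[o] V)) := by
  obtain ⟨Y, -, hY⟩ := hker
  have hstW : IsStableSub o V (S : Set H) W :=
    hW ▸ isStableSub_gspan_s7 (fun _ ha _ hb => S.mul_mem ha hb) _
  have hPX : ∀ x ∈ X, P x ∈ W := fun x hx => hW ▸ subset_gspan S.one_mem _ ⟨x, hx, rfl⟩
  let ι : Ind o S V0 →ₗ[o] Ind o S W := Submodule.inclusion (Ind.mono hle)
  have hι : ∀ (g : H) f, ι (g • f) = g • ι f := fun _ _ => rfl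
  have hPι : presMap.comp ι = P := linearMap_ext_of_unitElt hst
    (fun g f => by rw [LinearMap.comp_apply, hι, presMap_smul]; rfl) hP.1
    fun v hv => (presMap_unitElt hstW (hle hv)).trans (hP.2 v hv).symm
  let δ : X → Ind o S W := fun x => unitElt o hstW (hPX x x.2) - ι x
  let K := gspan o (Ind o S W) (Set.univ : Set H) (Set.range δ)
  have hK : K ≤ LinearMap.ker presMap := by
    refine gspan_le (isStableSub_ker fun g _ => presMap_smul g) ?_
    rintro _ ⟨x, rfl⟩
    rw [SetLike.mem_coe, LinearMap.mem_ker, map_sub, presMap_unitElt, ← LinearMap.comp_apply, hPι,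
      sub_self]
  have hQ : IsStableSub o (Ind o S W) (Set.univ : Set H) (LinearMap.range ι ⊔ K) :=
    isStableSub_sup (isStableSub_range fun g _ => hι g) (isStableSub_univ_gspan _)
  have htop : LinearMap.range ι ⊔ K = ⊤ := by
    refine eq_top_of_unitElt_mem hstW hQ (unitElt_mem_of_le_gspan hstW (fun s _ => hQ s trivial)
      hW.le ?_)
    rintro _ ⟨x, hx, rfl⟩
    refine ⟨hPX x hx, ?_⟩
    have hsplit : unitElt o hstW (hPX x hx) = ι x + δ ⟨x, hx⟩ := by simp [δ]
    rw [hsplit]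
    exact Submodule.add_mem_sup ⟨x, rfl⟩ (subset_gspan (Set.mem_univ 1) _ ⟨⟨x, hx⟩, rfl⟩)
  rw [LinearMap.ker_eq_map_ker_sup_of_range_sup_eq_top hPι hK htop, hY,
    map_gspan fun g _ => hι g, ← gspan_union]
  exact isFGOver_of_eq_gspan (Set.mem_univ 1)
    ((Y.finite_toSet.image ι).union (Set.finite_range δ)) rfl

theorem statement7_general
    (o : Type) [CommRing o]
    (B : Type) [Group B] (B0 : Subgroup B)
    (V : Type) [AddCommGroup V] [Module o V]
    [DistribMulAction B V] [SMulCommClass B o V]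
    (V0 : Submodule o V) (hst : IsStableSub o V (B0 : Set B) V0)
    (hgen : gspan o V (Set.univ : Set B) (V0 : Set V) = ⊤)
    (P : Ind o B0 V0 →ₗ[o] V) (hP : IsPresMap o hst P)
    (hker : IsFGOver o (↥(Ind o B0 V0)) (Set.univ : Set B) (LinearMap.ker P))
    (W0 : Submodule o ↥(Ind o B0 V0))
    (hW0fg : IsFGOver o (↥(Ind o B0 V0)) (B0 : Set B) W0)
    (hW0unit : ∀ v (hv : v ∈ V0), unitElt o hst hv ∈ W0) :
    gspan o V (Set.univ : Set B) ((Submodule.map P W0 : Submodule o V) : Set V) = ⊤ ∧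
    FinitelyPresentedVia o B0 (Submodule.map P W0) := by
  obtain ⟨X, -, rfl⟩ := hW0fg
  have hW : (gspan o _ (B0 : Set B) (X : Set (Ind o B0 V0))).map P =
      gspan o V (B0 : Set B) (P '' X) :=
    map_gspan (fun s _ f => hP.1 s f) _
  have hle : V0 ≤ (gspan o _ (B0 : Set B) (X : Set (Ind o B0 V0))).map P :=
    fun v hv => ⟨unitElt o hst hv, hW0unit v hv, hP.2 v hv⟩
  have hgen' := top_unique (hgen ▸ gspan_mono hle)
  have hstW := hW ▸ isStableSub_gspan_s7 (fun _ ha _ hb => B0.mul_mem ha hb) _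
  exact ⟨hgen', hstW, isFGOver_of_eq_gspan B0.one_mem (X.finite_toSet.image P) hW, hgen',
    presMap, isPresMap_presMap hstW, isFGOver_ker_presMap hP hker hle hW⟩

/-- If `ind_{B₀}^B (V₀) → V` is a finite presentation and `W₀` is a finitely
generated `o[B₀]`-submodule of the induction containing `[1, V₀]`, then the image `W₀'` of
`W₀` in `V` generates `V` and yields a finite presentation. -/
theorem statement7
    (o : Type) [CommRing o]
    (B : Type) [Group B] [TopologicalSpace B] (B0 : Subgroup B) (hB0 : IsOpen (B0 : Set B))
    (V : Type) [AddCommGroup V] [Module o V]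
    [DistribMulAction B V] [SMulCommClass B o V]
    (hsm : IsSmoothRep o B V)
    (V0 : Submodule o V) (hst : IsStableSub o V (B0 : Set B) V0)
    (hfg : IsFGOver o V (B0 : Set B) V0)
    (hgen : gspan o V (Set.univ : Set B) (V0 : Set V) = ⊤)
    (P : Ind o B0 V0 →ₗ[o] V) (hP : IsPresMap o hst P)
    (hker : IsFGOver o (↥(Ind o B0 V0)) (Set.univ : Set B) (LinearMap.ker P))
    (W0 : Submodule o ↥(Ind o B0 V0))
    (hW0st : IsStableSub o (↥(Ind o B0 V0)) (B0 : Set B) W0)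
    (hW0fg : IsFGOver o (↥(Ind o B0 V0)) (B0 : Set B) W0)
    (hW0unit : ∀ v (hv : v ∈ V0), unitElt o hst hv ∈ W0) :
    gspan o V (Set.univ : Set B) ((Submodule.map P W0 : Submodule o V) : Set V) = ⊤ ∧
    FinitelyPresentedVia o B0 (Submodule.map P W0) :=
  statement7_general o B B0 V V0 hst hgen P hP hker W0 hW0fg hW0unit
end
end
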